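/- arXiv:2510.00750 — 5 statements merged into one kernel-verified Lean document; each statement's English description precedes it below -/
import Mathlib

section
/- Let V be a vector space over ℚ, let Λ ⊆ V be an additive subgroup, and let V₁ ⊆ V₂ ⊆ V₃ ⊆ ⋯ be an increasing chain of finite-dimensional ℚ-subspaces of V whose union is V. If for every i the group Λ ∩ Vᵢ is a free abelian group, then Λ is a free abelian group. -/
/-!
Write `Mₙ = Λ ∩ Vₙ`. Each `Mₙ` is a free abelian group of finite rank, since a `ℤ`-basis of it
stays `ℚ`-linearly independent in the finite-dimensional space `Vₙ`. Because `Vₙ` is a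
`ℚ`-subspace, `Mₙ₊₁ / Mₙ` is torsion-free, hence free, so `Mₙ` has a free complement `Cₙ` in
`Mₙ₊₁`. A basis of `M₀` together with bases of all the `Cₙ` is then a basis of `Λ = ⋃ Mₙ`.
-/

namespace Submodule

section Ring

variable {R L : Type*} [Ring R] [AddCommGroup L] [Module R L]

theorem exists_linearIndepOn_id_span_eq (N : Submodule R L) [Module.Free R N] :
    ∃ S : Set L, LinearIndepOn R id S ∧ span R S = N := by
  let b := Module.Free.chooseBasis R N
  refine ⟨Set.range (N.subtype ∘ b), ?_, ?_⟩
  · exact (b.linearIndependent.map' N.subtype N.ker_subtype).linearIndepOn_id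
  · rw [Set.range_comp, span_image, b.span_eq, map_subtype_top]

theorem free_span_of_linearIndepOn {S : Set L} (hS : LinearIndepOn R id S) :
    Module.Free R (span R S) :=
  .of_basis ((Module.Basis.span hS.linearIndependent).map (LinearEquiv.ofEq _ _ (by simp)))

theorem exists_free_compl_of_free_quotient {N M : Submodule R L} (hNM : N ≤ M)
    [Module.Free R (M ⧸ N.submoduleOf M)] :
    ∃ C : Submodule R L, Module.Free R C ∧ Disjoint N C ∧ N ⊔ C = M := by
  obtain ⟨s, hs⟩ := (N.submoduleOf M).mkQ.exists_rightInverse_of_surjective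
    (N.submoduleOf M).range_mkQ
  have hsec (q) : (N.submoduleOf M).mkQ (s q) = q := LinearMap.congr_fun hs q
  have hinj : Function.Injective (M.subtype ∘ₗ s) :=
    fun a b hab => by rw [← hsec a, ← hsec b, M.injective_subtype hab]
  refine ⟨LinearMap.range (M.subtype ∘ₗ s), .of_equiv (LinearEquiv.ofInjective _ hinj), ?_, ?_⟩
  · rw [disjoint_def]
    rintro _ hN ⟨q, rfl⟩
    have : q = 0 := by
      rw [← hsec q, mkQ_apply, Quotient.mk_eq_zero]
      exact hN
    simp [this]
  · refine le_antisymm (sup_le hNM ?_) fun x hx => ?_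
    · rintro _ ⟨q, rfl⟩
      exact (s q).2
    · let y : M := ⟨x, hx⟩
      have hy : y - s ((N.submoduleOf M).mkQ y) ∈ N.submoduleOf M := by
        rw [← Quotient.mk_eq_zero, ← mkQ_apply, map_sub, hsec, sub_self]
      exact mem_sup.mpr ⟨_, hy, _, ⟨(N.submoduleOf M).mkQ y, rfl⟩, by simp [y]⟩

theorem free_iSup_of_exists_free_compl (M : ℕ → Submodule R L) [Module.Free R (M 0)]
    (hcompl : ∀ n, ∃ C : Submodule R L,
      Module.Free R C ∧ Disjoint (M n) C ∧ M n ⊔ C = M (n + 1)) :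
    Module.Free R ↥(⨆ n, M n) := by
  choose C hCfree hdisj hsup using hcompl
  obtain ⟨B₀, hB₀, hspan₀⟩ := (M 0).exists_linearIndepOn_id_span_eq
  choose B hB hspan using fun n => (C n).exists_linearIndepOn_id_span_eq
  set T : ℕ → Set L := fun n => B₀ ∪ ⋃ k < n, B k with hT
  have hTsucc (n : ℕ) : T (n + 1) = T n ∪ B n := by
    simp only [hT, Set.biUnion_lt_succ, Set.union_assoc]
  have hTbasis (n : ℕ) : LinearIndepOn R id (T n) ∧ span R (T n) = M n := by
    induction n with
    | zero => simpa [hT] using ⟨hB₀, hspan₀⟩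
    | succ n ih =>
      rw [hTsucc, span_union, ih.2, hspan, hsup]
      refine ⟨ih.1.union (hB n) ?_, rfl⟩
      simpa [ih.2, hspan] using hdisj n
  have hTmono : Monotone T := monotone_nat_of_le_succ fun n => by
    rw [hTsucc]
    exact Set.subset_union_left
  have hspanT : span R (⋃ n, T n) = ⨆ n, M n := by
    simp only [span_iUnion, fun n => (hTbasis n).2]
  rw [← hspanT]
  exact free_span_of_linearIndepOn
    (linearIndepOn_iUnion_of_directed hTmono.directed_le fun n => (hTbasis n).1)

theorem isTorsionFree_quotient_submoduleOf [Nontrivial R] {N M : Submodule R L}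
    (hsat : ∀ (r : R) (x : L), r ≠ 0 → x ∈ M → r • x ∈ N → x ∈ N) :
    Module.IsTorsionFree R (M ⧸ N.submoduleOf M) := by
  refine .of_smul_eq_zero fun r q hrq => ?_
  induction q using Quotient.induction_on with | H x => ?_
  rw [← Quotient.mk_smul, Quotient.mk_eq_zero] at hrq
  rw [Quotient.mk_eq_zero, or_iff_not_imp_left]
  exact fun hr => hsat r x hr x.2 hrq

end Ring

section PID

variable {R L : Type*} [CommRing R] [IsDomain R] [IsPrincipalIdealRing R]
  [AddCommGroup L] [Module R L]

theorem free_iSup_of_saturated (M : ℕ → Submodule R L) (hmono : Monotone M)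
    [∀ n, Module.Finite R (M n)] [Module.Free R (M 0)]
    (hsat : ∀ n (r : R) (x : L), r ≠ 0 → x ∈ M (n + 1) → r • x ∈ M n → x ∈ M n) :
    Module.Free R ↥(⨆ n, M n) := by
  refine free_iSup_of_exists_free_compl M fun n => ?_
  have := isTorsionFree_quotient_submoduleOf (hsat n)
  exact exists_free_compl_of_free_quotient (hmono n.le_succ)

end PID

section FractionRing

variable {R K V : Type*} [CommRing R] [Field K] [Algebra R K] [IsFractionRing R K]
  [AddCommGroup V] [Module K V] [Module R V] [IsScalarTower R K V]

theorem finite_of_free_of_le_restrictScalars {W : Submodule K V} [FiniteDimensional K W]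
    {N : Submodule R V} (hNW : N ≤ W.restrictScalars R) [Module.Free R N] :
    Module.Finite R N := by
  let b := Module.Free.chooseBasis R N
  have hli : LinearIndependent K (fun i => (b i : V)) :=
    (LinearIndependent.iff_fractionRing R K).mp
      (b.linearIndependent.map' N.subtype N.ker_subtype)
  let v : Module.Free.ChooseBasisIndex R N → W := fun i => ⟨b i, hNW (b i).2⟩
  have : Finite (Module.Free.ChooseBasisIndex R N) :=
    (LinearIndependent.of_comp W.subtype (v := v) hli).finite
  exact .of_basis b

theorem smul_mem_restrictScalars_iff (W : Submodule K V) {r : R} (hr : r ≠ 0) {x : V} :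
    r • x ∈ W.restrictScalars R ↔ x ∈ W := by
  rw [restrictScalars_mem, ← algebraMap_smul K, smul_mem_iff]
  exact (map_ne_zero_iff _ (IsFractionRing.injective R K)).mpr hr

theorem free_of_free_inf_restrictScalars [IsDomain R] [IsPrincipalIdealRing R]
    (Λ : Submodule R V) (W : ℕ → Submodule K V) (hmono : Monotone W)
    [∀ n, FiniteDimensional K (W n)] (hunion : ∀ v, ∃ n, v ∈ W n)
    (hfree : ∀ n, Module.Free R ↥(Λ ⊓ (W n).restrictScalars R)) :
    Module.Free R Λ := by
  set M : ℕ → Submodule R V := fun n => Λ ⊓ (W n).restrictScalars R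
  have hΛ : ⨆ n, M n = Λ := by
    refine le_antisymm (iSup_le fun n => inf_le_left) fun x hx => ?_
    obtain ⟨n, hn⟩ := hunion x
    exact le_iSup M n ⟨hx, hn⟩
  have (n : ℕ) : Module.Finite R (M n) := finite_of_free_of_le_restrictScalars inf_le_right
  have hsat (n : ℕ) (r : R) (x : V) (hr : r ≠ 0) (hx : x ∈ M (n + 1)) (hrx : r • x ∈ M n) :
      x ∈ M n :=
    ⟨hx.1, (smul_mem_restrictScalars_iff (W n) hr).mp hrx.2⟩
  rw [← hΛ]
  exact free_iSup_of_saturated M (fun m n hmn => inf_le_inf_left Λ (hmono hmn)) hsat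

end FractionRing

end Submodule

/-- Let `V` be a `ℚ`-vector space, `Λ ⊆ V` an additive subgroup, and `V₁ ⊆ V₂ ⊆ ⋯` an
increasing chain of finite-dimensional subspaces with union `V`.  If `Λ ∩ Vᵢ` is free abelian
for every `i`, then `Λ` is free abelian. -/
theorem stmt7 {V : Type*} [AddCommGroup V] [Module ℚ V]
    (Λ : AddSubgroup V) (Vs : ℕ → Submodule ℚ V)
    (hmono : Monotone Vs)
    (hfd : ∀ i : ℕ, FiniteDimensional ℚ (Vs i))
    (hunion : ∀ v : V, ∃ i : ℕ, v ∈ Vs i)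
    (hfree : ∀ i : ℕ, Module.Free ℤ ↥(Λ ⊓ (Vs i).toAddSubgroup)) :
    Module.Free ℤ ↥Λ :=
  Submodule.free_of_free_inf_restrictScalars (K := ℚ) Λ.toIntSubmodule Vs hmono hunion hfree
end

section
/- Let L be a field of characteristic zero such that the quotient group L^×/(L^×)² is finite, and let c₀, c₁, c₂, c₃ be four distinct elements of L; set f(u) = (u+c₀)(u+c₁)(u+c₂)(u+c₃). Then there exist a positive integer n and pairs (a₁,b₁),…,(aₙ,bₙ) with aᵢ ∈ L^× and bᵢ ∈ L, such that for all but finitely many t₀ ∈ L there exists an index i with f(aᵢ t₀ + bᵢ) a square in L. -/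
/-!
Colour each `m ∈ L` by the square class of `t₀ + m` in the finite group `Lˣ/(Lˣ)²`. By the
Hales–Jewett theorem (finite form of Gallai's theorem) there are finitely many homotheties
`u ↦ k • u + b`, `k > 0`, not depending on `t₀` or on the colouring, one of which sends
`c₀, …, c₃` to a monochromatic configuration. The four numbers `t₀ + k cⱼ + b` then lie in a
single square class, so their product is a square, and it equals `k⁴ f(t₀ / k + b / k)`.
Hence the exceptional set is in fact empty.
-/

open Finset

theorem sum_getD_eq_card_none_nsmul_add {ι α M : Type*} [Fintype ι] [AddCommMonoid M]
    (v : α → M) (w : ι → Option α) (x : α) :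
    ∑ i, v ((w i).getD x) = #{i | w i = none} • v x + ∑ i, ((w i).map v).getD 0 := by
  rw [← sum_const, sum_filter, ← sum_add_distrib]
  refine sum_congr rfl fun i _ => ?_
  cases w i <;> simp

namespace Combinatorics

theorem exists_finset_mono_homothetic_copy {α M : Type*} (κ : Type*) [Finite α] [Finite κ]
    [AddCommMonoid M] (v : α → M) :
    ∃ P : Finset (ℕ × M), (∀ p ∈ P, 0 < p.1) ∧
      ∀ C : M → κ, ∃ p ∈ P, ∃ col : κ, ∀ x, C (p.1 • v x + p.2) = col := by
  classical
  cases nonempty_fintype α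
  obtain ⟨ι, _, hι⟩ := Line.exists_mono_in_high_dimension α κ
  let homothety (w : ι → Option α) : ℕ × M := (#{i | w i = none}, ∑ i, ((w i).map v).getD 0)
  refine ⟨(univ.filter fun w => ∃ i, w i = none).image homothety, ?_, fun C => ?_⟩
  · simp only [mem_image, mem_filter, mem_univ, true_and]
    rintro _ ⟨w, ⟨i, hi⟩, rfl⟩
    exact card_pos.2 ⟨i, by simpa using hi⟩
  obtain ⟨l, col, hl⟩ := hι fun y => C (∑ i, v (y i))
  refine ⟨homothety l.idxFun, mem_image_of_mem _ (by simpa using l.proper), col, fun x => ?_⟩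
  rw [← hl x, ← sum_getD_eq_card_none_nsmul_add]
  rfl

end Combinatorics

section SquareClass

variable {G₀ : Type*} [CommGroupWithZero G₀]

/-- The class of `0` is an arbitrary choice: a zero factor makes a product a square anyway. -/
noncomputable def squareClass (x : G₀) : G₀ˣ ⧸ (powMonoidHom 2 : G₀ˣ →* G₀ˣ).range :=
  open scoped Classical in
  if h : x = 0 then 1 else QuotientGroup.mk (Units.mk0 x h)

theorem squareClass_units (u : G₀ˣ) : squareClass (u : G₀) = QuotientGroup.mk u := by
  simp [squareClass]

theorem sq_eq_one_of_quotient_squares (g : G₀ˣ ⧸ (powMonoidHom 2 : G₀ˣ →* G₀ˣ).range) :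
    g ^ 2 = 1 := by
  induction g using QuotientGroup.induction_on with
  | H u => exact (QuotientGroup.eq_one_iff _).2 ⟨u, rfl⟩

theorem isSquare_prod_of_squareClass_eq {ι : Type*} [Fintype ι] (hι : Even (Fintype.card ι))
    {x : ι → G₀} {g} (hx : ∀ i, squareClass (x i) = g) : IsSquare (∏ i, x i) := by
  by_cases hzero : ∃ i, x i = 0
  · obtain ⟨i, hi⟩ := hzero
    rw [prod_eq_zero (mem_univ i) hi]
    exact IsSquare.zero
  push Not at hzero
  lift x to ι → G₀ˣ using fun i => (hzero i).isUnit
  obtain ⟨m, hm⟩ := hι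
  have hclass : (QuotientGroup.mk (∏ i, x i) : G₀ˣ ⧸ (powMonoidHom 2 : G₀ˣ →* G₀ˣ).range) = 1 := by
    simp_rw [QuotientGroup.mk_prod, ← squareClass_units, hx, prod_const, card_univ, hm, ← two_mul,
      pow_mul, sq_eq_one_of_quotient_squares, one_pow]
  obtain ⟨w, hw⟩ := (QuotientGroup.eq_one_iff _).1 hclass
  exact ⟨w, by rw [← Units.coe_prod, ← hw]; simp [sq]⟩

end SquareClass

theorem exists_finset_forall_isSquare_prod {L α : Type*} [Field L] [CharZero L]
    [Finite (Lˣ ⧸ (powMonoidHom 2 : Lˣ →* Lˣ).range)] [Fintype α] (hα : Even (Fintype.card α))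
    (c : α → L) :
    ∃ Q : Finset (L × L), (∀ q ∈ Q, q.1 ≠ 0) ∧
      ∀ t : L, ∃ q ∈ Q, IsSquare (∏ j, (q.1 * t + q.2 + c j)) := by
  classical
  obtain ⟨P, hPpos, hP⟩ :=
    Combinatorics.exists_finset_mono_homothetic_copy (Lˣ ⧸ (powMonoidHom 2 : Lˣ →* Lˣ).range) c
  refine ⟨P.image fun p => ((p.1 : L)⁻¹, (p.1 : L)⁻¹ * p.2), ?_, fun t => ?_⟩
  · simp only [mem_image]
    rintro _ ⟨p, hp, rfl⟩
    exact inv_ne_zero (Nat.cast_ne_zero.2 (hPpos p hp).ne')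
  obtain ⟨⟨k, b⟩, hp, g, hg⟩ := hP fun m => squareClass (t + m)
  have hk : (k : L) ≠ 0 := Nat.cast_ne_zero.2 (hPpos _ hp).ne'
  refine ⟨_, mem_image_of_mem _ hp, ?_⟩
  have hfactor (j : α) :
      (k : L)⁻¹ * t + (k : L)⁻¹ * b + c j = (k : L)⁻¹ * (t + (k • c j + b)) := by
    rw [nsmul_eq_mul]
    field_simp
    ring
  simp_rw [hfactor, prod_mul_distrib, prod_const, card_univ]
  exact (hα.isSquare_pow _).mul (isSquare_prod_of_squareClass_eq hα hg)

theorem stmt14_general {L : Type*} [Field L] [CharZero L]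
    (hfin : Finite (Lˣ ⧸ (powMonoidHom 2 : Lˣ →* Lˣ).range))
    (c : Fin 4 → L) :
    ∃ n : ℕ, 0 < n ∧ ∃ a b : Fin n → L, (∀ i, a i ≠ 0) ∧
      {t₀ : L | ¬ ∃ i : Fin n, IsSquare (∏ j : Fin 4, (a i * t₀ + b i + c j))}.Finite := by
  obtain ⟨Q, hQ0, hQ⟩ := exists_finset_forall_isSquare_prod (by decide) c
  have hQne : Q.Nonempty := let ⟨q, hq, _⟩ := hQ 0; ⟨q, hq⟩
  let e := Q.equivFin
  refine ⟨#Q, hQne.card_pos, fun i => (e.symm i : L × L).1, fun i => (e.symm i : L × L).2,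
    fun i => hQ0 _ (e.symm i).2, Set.finite_empty.subset fun t ht => (ht ?_).elim⟩
  obtain ⟨q, hq, hsq⟩ := hQ t
  exact ⟨e ⟨q, hq⟩, by simpa using hsq⟩

/-- Let `L` be a field of characteristic zero such that `Lˣ/(Lˣ)²` is finite, and let
`c₀, c₁, c₂, c₃` be four distinct elements of `L`; set
`f(u) = (u+c₀)(u+c₁)(u+c₂)(u+c₃)`.  Then there are finitely many nonconstant linear functions
`aᵢ t + bᵢ` such that for all but finitely many `t₀ ∈ L`, some `f(aᵢ t₀ + bᵢ)` is a square
in `L`. -/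
theorem stmt14 {L : Type*} [Field L] [CharZero L]
    (hfin : Finite (Lˣ ⧸ (powMonoidHom 2 : Lˣ →* Lˣ).range))
    (c : Fin 4 → L) (hc : Function.Injective c) :
    ∃ n : ℕ, 0 < n ∧ ∃ a b : Fin n → L, (∀ i, a i ≠ 0) ∧
      {t₀ : L | ¬ ∃ i : Fin n, IsSquare (∏ j : Fin 4, (a i * t₀ + b i + c j))}.Finite :=
  stmt14_general hfin c
end

section
/- Let L be a field of characteristic zero whose absolute Galois group Gal(L̄/L) is topologically finitely generated. Then the quotient group L^×/(L^×)² is finite. -/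
/-!
Choose a square root `√a ∈ L̄` of each `a ∈ Lˣ`. For `σ ∈ Gal(L̄/L)` the ratio `σ √a / √a` is a
sign that does not depend on the choice of root, so `a ↦ σ √a / √a` is a homomorphism
`Lˣ → {±1}` killing the squares (the Kummer character of `σ`). If the Kummer characters of a
finite topological generating set `S` all take the value `1` at `a`, then `√a` is fixed by the
subgroup generated by `S`; its stabilizer is open, hence closed, so by density `√a` is fixed by
all of `Gal(L̄/L)`. As `L̄/L` is Galois in characteristic zero, `√a ∈ L` and `a` is a square.
Thus `Lˣ/(Lˣ)²` embeds into `{±1}^S`.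
-/

open IntermediateField

section Stabilizer

variable {K E : Type*} [Field K] [Field E] [Algebra K E]

theorem AlgEquiv.apply_eq_self_of_sq_eq_one (σ : E ≃ₐ[K] E) {u : E} (hu : u ^ 2 = 1) :
    σ u = u := by
  rcases sq_eq_one_iff.mp hu with rfl | rfl <;> simp

theorem isClosed_stabilizer_of_isIntegral {x : E} (hx : IsIntegral K x) :
    IsClosed (MulAction.stabilizer (E ≃ₐ[K] E) x : Set (E ≃ₐ[K] E)) := by
  have : FiniteDimensional K K⟮x⟯ := adjoin.finiteDimensional hx
  refine Subgroup.isClosed_of_isOpen _ (Subgroup.isOpen_mono ?_ K⟮x⟯.fixingSubgroup_isOpen)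
  intro σ hσ
  exact hσ ⟨x, mem_adjoin_simple_self K x⟩

theorem AlgEquiv.apply_eq_self_of_dense_closure {S : Set (E ≃ₐ[K] E)}
    (hS : Dense (Subgroup.closure S : Set (E ≃ₐ[K] E))) {x : E} (hx : IsIntegral K x)
    (hSx : ∀ s ∈ S, s x = x) (σ : E ≃ₐ[K] E) : σ x = x := by
  have hle : Subgroup.closure S ≤ MulAction.stabilizer (E ≃ₐ[K] E) x :=
    (Subgroup.closure_le _).mpr hSx
  exact (isClosed_stabilizer_of_isIntegral hx).closure_subset_iff.mpr hle (hS σ)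

end Stabilizer

section Kummer

variable {K E : Type*} [Field K] [Field E] [Algebra K E] [IsAlgClosed E]

variable (E) in
noncomputable def sqrtOf (a : K) : E :=
  (IsAlgClosed.exists_pow_nat_eq (algebraMap K E a) two_pos).choose

theorem sqrtOf_sq (a : K) : sqrtOf E a ^ 2 = algebraMap K E a :=
  (IsAlgClosed.exists_pow_nat_eq (algebraMap K E a) two_pos).choose_spec

theorem sqrtOf_ne_zero (a : Kˣ) : sqrtOf E (a : K) ≠ 0 := by
  intro h
  have := sqrtOf_sq (E := E) (a : K)
  rw [h, zero_pow two_ne_zero, eq_comm, map_eq_zero] at this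
  exact a.ne_zero this

noncomputable def kummerChar (σ : E ≃ₐ[K] E) : Kˣ →* E where
  toFun a := σ (sqrtOf E (a : K)) / sqrtOf E (a : K)
  map_one' := by
    have h1 : sqrtOf E (1 : K) ^ 2 = 1 := by rw [sqrtOf_sq, map_one]
    rw [Units.val_one, σ.apply_eq_self_of_sq_eq_one h1, div_self (sqrtOf_ne_zero (1 : Kˣ))]
  map_mul' a b := by
    have ha := sqrtOf_ne_zero (E := E) a
    have hb := sqrtOf_ne_zero (E := E) b
    -- the two square roots of `ab` differ by a sign, which every `σ` fixes
    set u := sqrtOf E ((a * b : Kˣ) : K) / (sqrtOf E (a : K) * sqrtOf E (b : K))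
    have hu : u ^ 2 = 1 := by
      rw [div_pow, mul_pow, sqrtOf_sq, sqrtOf_sq, sqrtOf_sq, Units.val_mul, map_mul,
        div_self (by simp)]
    have hab : sqrtOf E ((a * b : Kˣ) : K) = u * (sqrtOf E (a : K) * sqrtOf E (b : K)) :=
      (div_mul_cancel₀ _ (mul_ne_zero ha hb)).symm
    have hu0 : u ≠ 0 := by rintro h; simp [h] at hu
    rw [hab, map_mul, map_mul, σ.apply_eq_self_of_sq_eq_one hu]
    field_simp

theorem kummerChar_apply (σ : E ≃ₐ[K] E) (a : Kˣ) :
    kummerChar σ a = σ (sqrtOf E (a : K)) / sqrtOf E (a : K) := rfl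

theorem kummerChar_sq (σ : E ≃ₐ[K] E) (a : Kˣ) : kummerChar σ a ^ 2 = 1 := by
  rw [kummerChar_apply, div_pow, ← map_pow, sqrtOf_sq, σ.commutes,
    div_self (by simp)]

theorem kummerChar_eq_one_iff (σ : E ≃ₐ[K] E) (a : Kˣ) :
    kummerChar σ a = 1 ↔ σ (sqrtOf E (a : K)) = sqrtOf E (a : K) :=
  div_eq_one_iff_eq (sqrtOf_ne_zero a)

theorem range_powMonoidHom_two_le_ker_kummerChar (σ : E ≃ₐ[K] E) :
    (powMonoidHom 2 : Kˣ →* Kˣ).range ≤ (kummerChar σ).ker := by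
  rintro _ ⟨c, rfl⟩
  rw [MonoidHom.mem_ker, powMonoidHom_apply, map_pow, kummerChar_sq]

theorem mem_range_powMonoidHom_two_of_kummerChar_eq_one [IsGalois K E]
    {S : Set (E ≃ₐ[K] E)} (hS : Dense (Subgroup.closure S : Set (E ≃ₐ[K] E))) {a : Kˣ}
    (ha : ∀ s ∈ S, kummerChar s a = 1) : a ∈ (powMonoidHom 2 : Kˣ →* Kˣ).range := by
  have hfix (σ : E ≃ₐ[K] E) : σ (sqrtOf E (a : K)) = sqrtOf E (a : K) :=
    σ.apply_eq_self_of_dense_closure hS (Algebra.IsIntegral.isIntegral _)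
      fun s hs ↦ (kummerChar_eq_one_iff s a).mp (ha s hs)
  obtain ⟨c, hc⟩ := (InfiniteGalois.mem_range_algebraMap_iff_fixed _).mpr hfix
  have hc0 : c ≠ 0 := by
    rintro rfl
    exact sqrtOf_ne_zero a (by rw [← hc, map_zero])
  refine ⟨Units.mk0 c hc0, Units.ext ((algebraMap K E).injective ?_)⟩
  simp [hc, sqrtOf_sq]

end Kummer

/-- Let `L` be a field of characteristic zero whose absolute Galois group `Gal(L̄/L)` is
topologically finitely generated (with respect to the Krull topology).  Then `Lˣ/(Lˣ)²` is
finite. -/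
theorem stmt17 {L Lbar : Type*} [Field L] [CharZero L]
    [Field Lbar] [Algebra L Lbar] [IsAlgClosure L Lbar]
    (hfg : ∃ S : Set (Lbar ≃ₐ[L] Lbar), S.Finite ∧
      Dense ((Subgroup.closure S : Subgroup (Lbar ≃ₐ[L] Lbar)) : Set (Lbar ≃ₐ[L] Lbar))) :
    Finite (Lˣ ⧸ (powMonoidHom 2 : Lˣ →* Lˣ).range) := by
  have : IsAlgClosed Lbar := IsAlgClosure.isAlgClosed L
  obtain ⟨S, hSfin, hSdense⟩ := hfg
  have : Finite S := hSfin
  let χ : Lˣ →* (S → Lbar) := MonoidHom.pi fun s ↦ kummerChar (s : Lbar ≃ₐ[L] Lbar)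
  have hsq : (powMonoidHom 2 : Lˣ →* Lˣ).range ≤ χ.ker := fun a ha ↦
    funext fun s ↦ range_powMonoidHom_two_le_ker_kummerChar (s : Lbar ≃ₐ[L] Lbar) ha
  have hinj : Function.Injective (QuotientGroup.lift _ χ hsq) := by
    refine (injective_iff_map_eq_one _).mpr fun q hq ↦ ?_
    induction q using QuotientGroup.induction_on with | H a => ?_
    exact (QuotientGroup.eq_one_iff a).mpr <|
      mem_range_powMonoidHom_two_of_kummerChar_eq_one hSdense fun s hs ↦ congrFun hq ⟨s, hs⟩
  have hrange : (Set.range (QuotientGroup.lift _ χ hsq)).Finite := by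
    refine (Set.Finite.pi' fun _ ↦ ({1, -1} : Set Lbar).toFinite).subset ?_
    rintro _ ⟨q, rfl⟩
    induction q using QuotientGroup.induction_on with | H a => ?_
    exact fun s ↦ sq_eq_one_iff.mp (kummerChar_sq (s : Lbar ≃ₐ[L] Lbar) a)
  have := hrange.to_subtype
  exact Finite.of_injective_finite_range hinj
end

section
/- For all positive integers h and r there exists a positive integer N such that: every finite group H of order greater than N that is isomorphic to a subquotient of a finite direct product H₁ × ⋯ × Hₙ of finite groups each of order at most h contains a subgroup isomorphic to the elementary abelian group (ℤ/pℤ)^r for some prime p. -/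
/-!
A subquotient of a product of groups of order at most `h` has exponent dividing `h!`, so every
prime dividing its order divides `h!`, and a large order forces a large Sylow `p`-subgroup `P`.
A maximal normal abelian subgroup `A` of `P` is self-centralizing, so `P / A` embeds in `Aut A`
and `|P| ≤ |A| · |A|!`; hence `A` is large. As the exponent of `A` divides `p ^ h!`, `|A|` is
at most the `h!`-th power of the order of the `p`-torsion subgroup of `A`, an `𝔽_p`-vector space
whose dimension is therefore at least `r`.
-/

open Subgroup

namespace Nat

theorem dvd_pow_of_primeFactors_subset {n m M : ℕ} (hn : n ≠ 0) (hm : m ≠ 0)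
    (hsub : n.primeFactors ⊆ m.primeFactors)
    (hM : ∀ p ∈ n.primeFactors, n.factorization p ≤ M) : n ∣ m ^ M := by
  rw [← factorization_le_iff_dvd hn (pow_ne_zero M hm), factorization_pow]
  intro p
  by_cases hp : p ∈ n.primeFactors
  · have hpm := hsub hp
    calc n.factorization p ≤ M := hM p hp
      _ ≤ M * m.factorization p := Nat.le_mul_of_pos_right M
          ((prime_of_mem_primeFactors hpm).factorization_pos_of_dvd hm
            (dvd_of_mem_primeFactors hpm))
  · rw [← support_factorization, Finsupp.notMem_support_iff] at hp
    simp [hp]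

end Nat

section Exponent

variable {G : Type*} [Group G] [Finite G]

theorem primeFactors_card_subset_primeFactors_exponent :
    (Nat.card G).primeFactors ⊆ (Monoid.exponent G).primeFactors := by
  intro p hp
  have := Fact.mk (Nat.prime_of_mem_primeFactors hp)
  obtain ⟨g, hg⟩ := exists_prime_orderOf_dvd_card' p (Nat.dvd_of_mem_primeFactors hp)
  exact Nat.mem_primeFactors.mpr ⟨Fact.out, hg ▸ Monoid.order_dvd_exponent g,
    Monoid.exponent_ne_zero_of_finite⟩

theorem exists_lt_factorization_card_of_exponent_dvd {m M : ℕ} (hm : m ≠ 0)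
    (hexp : Monoid.exponent G ∣ m) (hcard : m ^ M < Nat.card G) :
    ∃ p, p.Prime ∧ p ∣ m ∧ M < (Nat.card G).factorization p := by
  have hsub := primeFactors_card_subset_primeFactors_exponent.trans
    (Nat.primeFactors_mono hexp hm)
  by_contra! h
  refine hcard.not_ge (Nat.le_of_dvd (pow_pos (Nat.pos_of_ne_zero hm) M)
    (Nat.dvd_pow_of_primeFactors_subset Nat.card_pos.ne' hm hsub fun p hp => ?_))
  have hpm := hsub hp
  exact h p (Nat.prime_of_mem_primeFactors hpm) (Nat.dvd_of_mem_primeFactors hpm)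

theorem IsPGroup.exponent_dvd_prime_pow {p m : ℕ} [Fact p.Prime] (hG : IsPGroup p G)
    (hm : m ≠ 0) (hexp : Monoid.exponent G ∣ m) : Monoid.exponent G ∣ p ^ m := by
  obtain ⟨n, hn⟩ := isPGroup_iff_exponent_eq_pow.mp hG
  rw [hn] at hexp ⊢
  exact pow_dvd_pow p ((Nat.lt_pow_self (Fact.out : p.Prime).one_lt).le.trans
    (Nat.le_of_dvd (Nat.pos_of_ne_zero hm) hexp))

end Exponent

theorem Subgroup.normal_of_le_center {G : Type*} [Group G] {H : Subgroup G}
    (hH : H ≤ center G) : H.Normal :=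
  ⟨fun n hn g => by rw [mem_center_iff.mp (hH hn) g, mul_inv_cancel_right]; exact hn⟩

theorem card_le_card_mul_factorial_of_centralizer_le {G : Type*} [Group G] [Finite G]
    {A : Subgroup G} [A.Normal] (hA : centralizer A ≤ A) :
    Nat.card G ≤ Nat.card A * (Nat.card A).factorial := by
  let f : G →* MulAut A := MulAut.conjNormal
  have hker : f.ker ≤ A := fun g hg => hA <| mem_centralizer_iff.mpr fun a ha => by
    have : g * a * g⁻¹ = a := by
      rw [← MulAut.conjNormal_apply g ⟨a, ha⟩, f.mem_ker.mp hg]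
      rfl
    exact (mul_inv_eq_iff_eq_mul.mp this).symm
  have hrange : Nat.card f.range ≤ (Nat.card A).factorial := calc
    Nat.card f.range ≤ Nat.card (MulAut A) := card_le_card_group f.range
    _ ≤ Nat.card (Equiv.Perm A) :=
      Nat.card_le_card_of_injective _ MulEquiv.toEquiv_injective
    _ = (Nat.card A).factorial := Nat.card_perm
  calc Nat.card G = Nat.card f.ker * Nat.card f.range := by
        rw [← f.ker.card_mul_index, index_ker]
    _ ≤ Nat.card A * (Nat.card A).factorial := Nat.mul_le_mul (card_le_of_le hker) hrange

namespace IsPGroup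

variable {p : ℕ} [Fact p.Prime] {G : Type*} [Group G] [Finite G]

theorem exists_mem_center_ne_one (hG : IsPGroup p G) {N : Subgroup G} [N.Normal]
    (hN : N ≠ ⊥) : ∃ z ∈ N, z ∈ center G ∧ z ≠ 1 := by
  have hdvd : p ∣ Nat.card N := by
    have := (nontrivial_iff_ne_bot N).mpr hN
    obtain ⟨k, hk, hcard⟩ := (hG.to_subgroup N).nontrivial_iff_card.mp this
    exact hcard ▸ dvd_pow_self p hk.ne'
  obtain ⟨z, hz, hz1⟩ := (hG.of_equiv ConjAct.toConjAct)
    |>.exists_fixed_point_of_prime_dvd_card_of_fixed_point N hdvd (a := 1) fun g => smul_one g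
  refine ⟨z, z.2, mem_center_iff.mpr fun g => ?_, fun h => hz1 (Subtype.ext h.symm)⟩
  have := congrArg Subtype.val (hz (ConjAct.toConjAct g))
  rw [ConjAct.Subgroup.val_conj_smul, ConjAct.smul_def, ConjAct.ofConjAct_toConjAct] at this
  exact mul_inv_eq_iff_eq_mul.mp this

theorem centralizer_le_of_maximal (hG : IsPGroup p G) {A : Subgroup G} [A.Normal]
    (hA : A ≤ centralizer A)
    (hmax : ∀ B : Subgroup G, B.Normal → B ≤ centralizer B → A ≤ B → B = A) :
    centralizer A ≤ A := by
  by_contra hC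
  let π := QuotientGroup.mk' A
  have hN : (centralizer A).map π ≠ ⊥ := by
    rwa [Ne, Subgroup.map_eq_bot_iff, QuotientGroup.ker_mk']
  obtain ⟨_, ⟨x, hx, rfl⟩, hcenter, hx1⟩ :=
    (hG.to_quotient A).exists_mem_center_ne_one hN
  -- `B = ⟨A, x⟩` is normal because `π x` is central in `G ⧸ A`.
  let B := (zpowers (π x)).comap π
  have := normal_of_le_center (zpowers_le.mpr hcenter)
  have hAB : A ≤ B := by
    simpa only [B, ← QuotientGroup.ker_mk' A] using π.ker_le_comap (zpowers (π x))
  have hxB : x ∈ B := mem_zpowers (π x)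
  have hB : ∀ u ∈ B, ∃ i : ℤ, ∃ a ∈ A, u = x ^ i * a := by
    rintro u ⟨i, hi⟩
    refine ⟨i, (x ^ i)⁻¹ * u, ?_, by group⟩
    rw [← QuotientGroup.eq, ← QuotientGroup.mk'_apply, ← QuotientGroup.mk'_apply, map_zpow]
    exact hi
  have hBcomm : B ≤ centralizer B := by
    intro u hu
    rw [mem_centralizer_iff]
    intro v hv
    obtain ⟨i, a, ha, rfl⟩ := hB u hu
    obtain ⟨j, b, hb, rfl⟩ := hB v hv
    have hxa : Commute a x := mem_centralizer_iff.mp hx a ha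
    have hxb : Commute b x := mem_centralizer_iff.mp hx b hb
    have hab : Commute b a := mem_centralizer_iff.mp (hA ha) b hb
    exact ((Commute.zpow_zpow_self x j i).mul_right (hxa.zpow_right j).symm).mul_left
      ((hxb.zpow_right i).mul_right hab)
  have hxA : x ∈ A := hmax B inferInstance hBcomm hAB ▸ hxB
  exact hx1 ((QuotientGroup.eq_one_iff x).mpr hxA)

theorem exists_normal_le_centralizer_card_le (hG : IsPGroup p G) :
    ∃ A : Subgroup G, A.Normal ∧ A ≤ centralizer A ∧
      Nat.card G ≤ Nat.card A * (Nat.card A).factorial := by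
  let S := {A : Subgroup G // A.Normal ∧ A ≤ centralizer A}
  have : Nonempty S := ⟨⟨⊥, inferInstance, bot_le⟩⟩
  obtain ⟨⟨A, hAn, hA⟩, hmax⟩ := Finite.exists_max fun A : S => Nat.card A.1
  refine ⟨A, hAn, hA, card_le_card_mul_factorial_of_centralizer_le ?_⟩
  exact hG.centralizer_le_of_maximal hA fun B hBn hB hAB =>
    (eq_of_le_of_card_ge hAB (hmax ⟨B, hBn, hB⟩)).symm

end IsPGroup

theorem card_le_card_ker_powMonoidHom_pow {G : Type*} [CommGroup G] [Finite G] (p : ℕ) {a : ℕ}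
    (hG : ∀ x : G, x ^ p ^ a = 1) :
    Nat.card G ≤ Nat.card (powMonoidHom p : G →* G).ker ^ a := by
  induction a generalizing G with
  | zero =>
    have : Subsingleton G := ⟨fun x y => by simpa using (hG x).trans (hG y).symm⟩
    simp [Nat.card_unique]
  | succ a ih =>
    let f : G →* G := powMonoidHom p
    have hrange : ∀ y : f.range, y ^ p ^ a = 1 := by
      rintro ⟨_, x, rfl⟩
      exact Subtype.ext <| by simpa [f, ← pow_mul, ← pow_succ'] using hG x
    have hker : Nat.card (powMonoidHom p : f.range →* f.range).ker ≤ Nat.card f.ker :=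
      Nat.card_le_card_of_injective (fun y => ⟨y.1.1, congrArg Subtype.val y.2⟩)
        fun y z h => by
          ext
          exact congrArg (fun w : f.ker => (w : G)) h
    calc Nat.card G = Nat.card f.ker * Nat.card f.range := by
          rw [← f.ker.card_mul_index, index_ker]
      _ ≤ Nat.card f.ker * Nat.card f.ker ^ a :=
          Nat.mul_le_mul_left _ ((ih hrange).trans (Nat.pow_le_pow_left hker a))
      _ = Nat.card f.ker ^ (a + 1) := (pow_succ' _ _).symm

theorem exists_injective_of_pow_prime_eq_one {p r : ℕ} [Fact p.Prime] {G : Type*} [CommGroup G]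
    [Finite G] (hG : ∀ x : G, x ^ p = 1) (hcard : p ^ r ≤ Nat.card G) :
    ∃ f : Multiplicative (Fin r → ZMod p) →* G, Function.Injective f := by
  have : Module (ZMod p) (Additive G) := AddCommGroup.zmodModule fun x => hG x.toMul
  have : Module.Finite (ZMod p) (Additive G) := Module.Finite.of_finite
  have hr : r ≤ Module.finrank (ZMod p) (Additive G) := by
    change p ^ r ≤ Nat.card (Additive G) at hcard
    rwa [Module.natCard_eq_pow_finrank (K := ZMod p), Nat.card_zmod,
      Nat.pow_le_pow_iff_right (Fact.out : p.Prime).one_lt] at hcard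
  obtain ⟨f, hf⟩ := finrank_le_iff_exists_linearMap.mp
    ((Module.finrank_fin_fun (ZMod p)).trans_le hr)
  exact ⟨AddMonoidHom.toMultiplicativeLeft f.toAddMonoidHom, hf⟩

open scoped IsMulCommutative in
theorem IsPGroup.exists_injective_of_exponent_dvd {p m r : ℕ} [Fact p.Prime] {G : Type*}
    [Group G] [Finite G] (hG : IsPGroup p G) (hm : m ≠ 0) (hexp : Monoid.exponent G ∣ m)
    (hcard : (p ^ r) ^ m * ((p ^ r) ^ m).factorial < Nat.card G) :
    ∃ f : Multiplicative (Fin r → ZMod p) →* G, Function.Injective f := by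
  obtain ⟨A, -, hAcomm, hGA⟩ := hG.exists_normal_le_centralizer_card_le
  have hA : (p ^ r) ^ m ≤ Nat.card A := by
    by_contra! hA
    exact hcard.not_ge (hGA.trans (Nat.mul_le_mul hA.le (Nat.factorial_le hA.le)))
  have := le_centralizer_iff_isMulCommutative.mp hAcomm
  have hexpA : ∀ x : A, x ^ p ^ m = 1 := Monoid.exponent_dvd_iff_forall_pow_eq_one.mp <|
    (hG.to_subgroup A).exponent_dvd_prime_pow hm <|
      (Monoid.exponent_dvd_of_monoidHom A.subtype A.subtype_injective).trans hexp
  let Ω := (powMonoidHom p : A →* A).ker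
  have hΩ : p ^ r ≤ Nat.card Ω := by
    by_contra! hΩ
    exact (hA.trans (card_le_card_ker_powMonoidHom_pow p hexpA)).not_gt
      (Nat.pow_lt_pow_left hΩ hm)
  obtain ⟨f, hf⟩ := exists_injective_of_pow_prime_eq_one (fun x : Ω => Subtype.ext x.2) hΩ
  exact ⟨A.subtype.comp (Ω.subtype.comp f),
    A.subtype_injective.comp (Ω.subtype_injective.comp hf)⟩

/-- With `s = (m ^ r) ^ m`, a group of exponent dividing `m` and order exceeding this bound has a
Sylow subgroup of order exceeding `s * s!`. -/
def elementaryAbelianRankBound (m r : ℕ) : ℕ :=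
  m ^ ((m ^ r) ^ m * ((m ^ r) ^ m).factorial)

theorem exists_injective_of_exponent_dvd {m r : ℕ} (hm : m ≠ 0) {G : Type*} [Group G] [Finite G]
    (hexp : Monoid.exponent G ∣ m) (hcard : elementaryAbelianRankBound m r < Nat.card G) :
    ∃ p, p.Prime ∧ ∃ f : Multiplicative (Fin r → ZMod p) →* G, Function.Injective f := by
  set s := (m ^ r) ^ m
  obtain ⟨p, hp, hpm, hM⟩ := exists_lt_factorization_card_of_exponent_dvd hm hexp hcard
  have := Fact.mk hp
  let P : Sylow p G := default
  have hs : (p ^ r) ^ m ≤ s :=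
    Nat.pow_le_pow_left (Nat.pow_le_pow_left (Nat.le_of_dvd (Nat.pos_of_ne_zero hm) hpm) r) m
  have hP : (p ^ r) ^ m * ((p ^ r) ^ m).factorial < Nat.card P := calc
    _ ≤ s * s.factorial := Nat.mul_le_mul hs (Nat.factorial_le hs)
    _ < (Nat.card G).factorization p := hM
    _ < p ^ (Nat.card G).factorization p := Nat.lt_pow_self hp.one_lt
    _ = Nat.card P := P.card_eq_multiplicity.symm
  obtain ⟨f, hf⟩ := P.isPGroup'.exists_injective_of_exponent_dvd hm
    ((Monoid.exponent_dvd_of_monoidHom _ (P : Subgroup G).subtype_injective).trans hexp) hP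
  exact ⟨p, hp, (P : Subgroup G).subtype.comp f, (P : Subgroup G).subtype_injective.comp hf⟩

theorem exponent_subquotient_pi_dvd_factorial {ι : Type*} [Fintype ι] {Hs : ι → Type*}
    [∀ i, Group (Hs i)] [∀ i, Finite (Hs i)] {h : ℕ} (hcard : ∀ i, Nat.card (Hs i) ≤ h)
    (B : Subgroup (∀ i, Hs i)) (C : Subgroup B) [C.Normal] :
    Monoid.exponent (B ⧸ C) ∣ h.factorial := by
  refine (Group.exponent_quotient_dvd C).trans <|
    (Monoid.exponent_dvd_of_monoidHom B.subtype B.subtype_injective).trans ?_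
  rw [Monoid.exponent_pi]
  exact Finset.lcm_dvd fun i _ =>
    Group.exponent_dvd_nat_card.trans (Nat.dvd_factorial Nat.card_pos (hcard i))

theorem stmt18_general (h r : ℕ) :
    ∃ N : ℕ, 0 < N ∧
      ∀ (n : ℕ) (Hs : Fin n → Type) [∀ i, Group (Hs i)] [∀ i, Finite (Hs i)],
        (∀ i, Nat.card (Hs i) ≤ h) →
        ∀ (B : Subgroup (∀ i, Hs i)) (C : Subgroup B) [C.Normal],
          ∀ (H : Type) [Group H], Nonempty (H ≃* (B ⧸ C)) → N < Nat.card H →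
            ∃ p : ℕ, p.Prime ∧
              ∃ φ : Multiplicative (Fin r → ZMod p) →* H, Function.Injective φ := by
  refine ⟨elementaryAbelianRankBound h.factorial r, pow_pos h.factorial_pos _, ?_⟩
  intro n Hs _ _ hcard B C _ H _ ⟨e⟩ hH
  have : Finite H := Finite.of_equiv _ e.symm.toEquiv
  have hexp : Monoid.exponent H ∣ h.factorial :=
    Monoid.exponent_eq_of_mulEquiv e ▸ exponent_subquotient_pi_dvd_factorial hcard B C
  exact exists_injective_of_exponent_dvd h.factorial_ne_zero hexp hH

/-- For all positive integers `h` and `r` there exists a positive integer `N` such that every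
finite group `H` of order greater than `N` that is isomorphic to a subquotient of a finite
direct product `H₁ × ⋯ × Hₙ` of finite groups of order at most `h` contains a subgroup
isomorphic to the elementary abelian group `(ℤ/pℤ)^r` for some prime `p`. -/
theorem stmt18 (h r : ℕ) (hh : 0 < h) (hr : 0 < r) :
    ∃ N : ℕ, 0 < N ∧
      ∀ (n : ℕ) (Hs : Fin n → Type) [∀ i, Group (Hs i)] [∀ i, Finite (Hs i)],
        (∀ i, Nat.card (Hs i) ≤ h) →
        ∀ (B : Subgroup (∀ i, Hs i)) (C : Subgroup B) [C.Normal],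
          ∀ (H : Type) [Group H], Nonempty (H ≃* (B ⧸ C)) → N < Nat.card H →
            ∃ p : ℕ, p.Prime ∧
              ∃ φ : Multiplicative (Fin r → ZMod p) →* H, Function.Injective φ :=
  stmt18_general h r
end

section
/- Let S be an integral domain of characteristic zero that is finitely generated as a ℤ-algebra. Then there exist infinitely many primes p such that there is a surjective ring homomorphism from S onto the finite field 𝔽_p. -/
/-!
Let `K` be the fraction field of `S`. A residue field `L` of the finite-type `ℚ`-algebra generated
by `S` in `K` is finite over `ℚ` (Nullstellensatz), so `S` maps to a number field `L = ℚ(θ)` with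
`θ` integral over `ℤ`. Since `S` is finitely generated, its image lies in `ℤ[θ][1/N]` for some
integer `N ≠ 0`, and `ℤ[θ] ≅ ℤ[X]/(g)` for the minimal polynomial `g` of `θ`. A root of `g`
modulo a prime `p ∤ N` thus gives a ring map `S → 𝔽_p`, and by Schur's theorem a nonconstant
integer polynomial has a root modulo infinitely many primes.
-/

open Polynomial

namespace Polynomial

theorem exists_mem_eval_ne_of_infinite {R : Type*} [CommRing R] [IsDomain R] {g : R[X]}
    (hg : 0 < g.degree) {s : Set R} (hs : s.Infinite) (a b : R) :
    ∃ x ∈ s, g.eval x ≠ a ∧ g.eval x ≠ b := by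
  classical
  have hne (c : R) : g - C c ≠ 0 := fun h => by simp [← degree_sub_C hg (a := c), h] at hg
  obtain ⟨x, hxs, hx⟩ :=
    hs.exists_notMem_finset ((g - C a).roots.toFinset ∪ (g - C b).roots.toFinset)
  refine ⟨x, hxs, fun h => hx ?_, fun h => hx ?_⟩ <;> simp [mem_roots (hne _), h]

theorem exists_prime_gt_dvd_eval (g : ℤ[X]) (hg : 0 < g.degree) (n : ℕ) :
    ∃ p : ℕ, p.Prime ∧ n < p ∧ ∃ x : ℤ, (p : ℤ) ∣ g.eval x := by
  set c := g.coeff 0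
  by_cases hc : c = 0
  · obtain ⟨p, hnp, hp⟩ := Nat.exists_infinite_primes (n + 1)
    exact ⟨p, hp, hnp, 0, by simp [← coeff_zero_eq_eval_zero, c, hc]⟩
  -- `g (c n! k) = c (1 + n! k w)`, and a prime factor of `1 + n! k w` cannot divide `n!`.
  have hm : c * n.factorial ≠ 0 := mul_ne_zero hc (by positivity)
  obtain ⟨_, ⟨k, rfl⟩, hgc, hgc'⟩ := exists_mem_eval_ne_of_infinite hg
    (Set.infinite_range_of_injective (mul_right_injective₀ hm)) c (-c)
  obtain ⟨w, hw⟩ : c * n.factorial * k ∣ g.eval (c * n.factorial * k) - c := by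
    simpa [← coeff_zero_eq_eval_zero] using sub_dvd_eval_sub (c * n.factorial * k) 0 g
  set u := 1 + n.factorial * k * w
  have hgu : g.eval (c * n.factorial * k) = c * u := by linear_combination hw
  obtain ⟨p, hp, hpu⟩ : ∃ p : ℕ, p.Prime ∧ p ∣ u.natAbs := Nat.exists_prime_and_dvd fun h => by
    rcases Int.natAbs_eq_iff.mp h with h | h <;> simp_all
  have hpu : (p : ℤ) ∣ u := Int.ofNat_dvd_left.mpr hpu
  refine ⟨p, hp, not_le.mp fun hpn => hp.one_lt.ne' ?_, _, hgu ▸ hpu.mul_left c⟩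
  have hpf : (p : ℤ) ∣ n.factorial * k * w :=
    (Int.natCast_dvd_natCast.mpr (Nat.dvd_factorial hp.pos hpn)).mul_right _ |>.mul_right _
  exact Int.natCast_dvd_natCast.mp ((dvd_add_left hpf).mp hpu) |> Nat.dvd_one.mp

theorem infinite_setOf_prime_exists_aeval_eq_zero (g : ℤ[X]) (hg : 0 < g.degree) :
    {p : ℕ | p.Prime ∧ ∃ r : ZMod p, aeval r g = 0}.Infinite :=
  Set.infinite_of_forall_exists_gt fun n => by
    obtain ⟨p, hp, hnp, x, hx⟩ := exists_prime_gt_dvd_eval g hg n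
    refine ⟨p, ⟨hp, x, ?_⟩, hnp⟩
    rw [← map_intCast (algebraMap ℤ (ZMod p)), aeval_algebraMap_apply, algebraMap_int_eq,
      eq_intCast, ZMod.intCast_zmod_eq_zero_iff_dvd]
    simpa [aeval_def, eval₂_eq_eval_map] using hx

end Polynomial

theorem Int.finite_setOf_natCast_dvd {N : ℤ} (hN : N ≠ 0) : {p : ℕ | (p : ℤ) ∣ N}.Finite :=
  N.natAbs.divisors.finite_toSet.subset fun p hp =>
    Nat.mem_divisors.mpr ⟨Int.ofNat_dvd_left.mp hp, by simpa using hN⟩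

universe v

theorem exists_ringHom_finiteDimensional_rat {S : Type*} {K : Type v} [CommRing S] [Field K]
    [CharZero K] [hfg : Algebra.FiniteType ℤ S] (f : S →+* K) :
    ∃ (L : Type v) (_ : Field L) (_ : Algebra ℚ L) (_ : FiniteDimensional ℚ L),
      Nonempty (S →+* L) := by
  obtain ⟨s, hs⟩ := hfg.out
  let A := Algebra.adjoin ℚ (f '' s)
  have : Algebra.FiniteType ℚ A :=
    (Subalgebra.fg_iff_finiteType A).mp ⟨(s.finite_toSet.image f).toFinset, by simp [A]⟩
  have hf (x : S) : f x ∈ A := by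
    have : (⊤ : Subalgebra ℤ S).map f.toIntAlgHom ≤ A.restrictScalars ℤ := by
      rw [← hs, AlgHom.map_adjoin]
      exact Algebra.adjoin_le Algebra.subset_adjoin
    exact this ⟨x, Algebra.mem_top, rfl⟩
  obtain ⟨m, hm⟩ := Ideal.exists_maximal A
  let := Ideal.Quotient.field m
  let : Algebra ℚ (A ⧸ m) := Ideal.Quotient.algebra ℚ
  have : Module.Finite ℚ (A ⧸ m) := finite_of_finite_type_of_isJacobsonRing ℚ (A ⧸ m)
  exact ⟨A ⧸ m, inferInstance, inferInstance, this,
    ⟨(Ideal.Quotient.mk m).comp (f.codRestrict A hf)⟩⟩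

theorem exists_isIntegral_int_adjoin_eq_top (L : Type*) [Field L] [Algebra ℚ L]
    [FiniteDimensional ℚ L] : ∃ θ : L, IsIntegral ℤ θ ∧ Algebra.adjoin ℚ {θ} = ⊤ := by
  have : CharZero L := charZero_of_injective_algebraMap (algebraMap ℚ L).injective
  obtain ⟨θ, hθ⟩ := Field.exists_primitive_element ℚ L
  have hθ' : IsAlgebraic ℤ θ :=
    (IsFractionRing.isAlgebraic_iff ℤ ℚ L).mpr (Algebra.IsAlgebraic.isAlgebraic θ)
  obtain ⟨y, hy, hyθ⟩ := hθ'.exists_integral_multiple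
  refine ⟨y • θ, hyθ, ?_⟩
  rw [← IntermediateField.adjoin_simple_toSubalgebra_of_isAlgebraic
    (Algebra.IsAlgebraic.isAlgebraic _), ← IntermediateField.top_toSubalgebra,
    IntermediateField.toSubalgebra_inj, eq_top_iff, ← hθ, IntermediateField.adjoin_simple_le_iff]
  convert IntermediateField.smul_mem _ (IntermediateField.mem_adjoin_simple_self ℚ (y • θ))
    (x := (y : ℚ)⁻¹) using 1
  rw [← Int.cast_smul_eq_zsmul ℚ, smul_smul, inv_mul_cancel₀ (by exact_mod_cast hy), one_smul]

section Denominators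

variable {L : Type*} [CommRing L] [Algebra ℚ L] {s : Set L}

theorem exists_int_mul_mem_adjoin_int {z : L} (hz : z ∈ Algebra.adjoin ℚ s) :
    ∃ b : ℤ, b ≠ 0 ∧ (b : L) * z ∈ Algebra.adjoin ℤ s := by
  induction hz using Algebra.adjoin_induction with
  | mem x hx => exact ⟨1, one_ne_zero, by simpa using Algebra.subset_adjoin hx⟩
  | algebraMap q =>
    refine ⟨q.den, by exact_mod_cast q.den_ne_zero, ?_⟩
    rw [Int.cast_natCast, ← map_natCast (algebraMap ℚ L), ← map_mul, Rat.den_mul_eq_num,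
      map_intCast]
    exact intCast_mem _ _
  | add x y _ _ hx hy =>
    obtain ⟨b, hb, hbx⟩ := hx
    obtain ⟨c, hc, hcy⟩ := hy
    refine ⟨b * c, mul_ne_zero hb hc, ?_⟩
    have : ((b * c : ℤ) : L) * (x + y) = c * (b * x) + b * (c * y) := by push_cast; ring
    rw [this]
    exact add_mem (mul_mem (intCast_mem _ _) hbx) (mul_mem (intCast_mem _ _) hcy)
  | mul x y _ _ hx hy =>
    obtain ⟨b, hb, hbx⟩ := hx
    obtain ⟨c, hc, hcy⟩ := hy
    refine ⟨b * c, mul_ne_zero hb hc, ?_⟩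
    have : ((b * c : ℤ) : L) * (x * y) = (b * x) * (c * y) := by push_cast; ring
    rw [this]
    exact mul_mem hbx hcy

theorem exists_int_mul_mem_adjoin_int_of_finite {t : Set L} (ht : t.Finite)
    (hts : t ⊆ Algebra.adjoin ℚ s) :
    ∃ b : ℤ, b ≠ 0 ∧ ∀ z ∈ t, (b : L) * z ∈ Algebra.adjoin ℤ s := by
  induction t, ht using Set.Finite.induction_on with
  | empty => exact ⟨1, one_ne_zero, by simp⟩
  | @insert z t _ _ ih =>
    obtain ⟨b, hb, hbz⟩ := exists_int_mul_mem_adjoin_int (hts (Set.mem_insert z t))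
    obtain ⟨c, hc, hct⟩ := ih ((Set.subset_insert z t).trans hts)
    refine ⟨b * c, mul_ne_zero hb hc, Set.forall_mem_insert.mpr ⟨?_, fun y hy => ?_⟩⟩
    · rw [Int.cast_mul, mul_right_comm]
      exact mul_mem hbz (intCast_mem _ _)
    · rw [Int.cast_mul, mul_assoc]
      exact mul_mem (intCast_mem _ _) (hct y hy)

end Denominators

theorem Localization.awayLift_injective {B L : Type*} [CommRing B] [IsDomain B] [CommRing L]
    {f : B →+* L} (hf : Function.Injective f) {x : B} (hx : x ≠ 0) (hfx : IsUnit (f x)) :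
    Function.Injective (Localization.awayLift f x hfx) := by
  have hinj := IsLocalization.injective (Localization.Away x)
    (powers_le_nonZeroDivisors_of_noZeroDivisors hx)
  exact IsLocalization.lift_injective_iff _ |>.mpr fun a b => hinj.eq_iff.trans hf.eq_iff.symm

theorem RingHom.exists_comp_eq_of_range_le {R A L : Type*} [Ring R] [Ring A] [Ring L]
    {f : A →+* L} (hf : Function.Injective f) {g : R →+* L} (h : g.range ≤ f.range) :
    ∃ χ : R →+* A, f.comp χ = g := by
  let e := RingEquiv.ofLeftInverse (Function.leftInverse_invFun hf)
  refine ⟨(e.symm : f.range →+* A).comp (g.codRestrict f.range fun x => h ⟨x, rfl⟩), ?_⟩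
  ext x
  exact congrArg Subtype.val (e.apply_symm_apply ⟨g x, h ⟨x, rfl⟩⟩)

theorem exists_ringHom_away_adjoin_int {S L : Type*} [CommRing S] [hfg : Algebra.FiniteType ℤ S]
    [CommRing L] [IsDomain L] [Algebra ℚ L] (φ : S →+* L) {θ : L}
    (hθ : Algebra.adjoin ℚ {θ} = ⊤) :
    ∃ N : ℤ, N ≠ 0 ∧ Nonempty (S →+* Localization.Away (N : Algebra.adjoin ℤ {θ})) := by
  obtain ⟨s, hs⟩ := hfg.out
  obtain ⟨N, hN, hNs⟩ := exists_int_mul_mem_adjoin_int_of_finite (s := {θ})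
    (s.finite_toSet.image φ) (by simp [hθ])
  let B := Algebra.adjoin ℤ {θ}
  have hunit : IsUnit ((B.val : B →+* L) N) := by
    rw [map_intCast, ← map_intCast (algebraMap ℚ L)]
    exact (Ne.isUnit (by exact_mod_cast hN)).map _
  let ε := Localization.awayLift (B.val : B →+* L) N hunit
  have hε : Function.Injective ε :=
    Localization.awayLift_injective Subtype.val_injective
      (fun h => hunit.ne_zero (by rw [h, map_zero])) hunit
  have hεB (b : B) : (b : L) ∈ ε.range := ⟨algebraMap B _ b, IsLocalization.Away.lift_eq _ _ b⟩
  have hεN : (N : L) * ε (IsLocalization.Away.invSelf (N : B)) = 1 := by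
    have := congrArg ε (IsLocalization.Away.mul_invSelf (S := Localization.Away (N : B)) (N : B))
    rwa [map_mul, map_one, IsLocalization.Away.lift_eq, map_intCast] at this
  have hφ : φ.range ≤ ε.range := by
    rintro _ ⟨x, rfl⟩
    have hx : x ∈ Algebra.adjoin ℤ (s : Set S) := hs ▸ Algebra.mem_top
    induction hx using Algebra.adjoin_induction with
    | mem x hx =>
      rw [← one_mul (φ x), ← hεN, mul_comm (N : L), mul_assoc]
      exact mul_mem ⟨_, rfl⟩ (hεB ⟨_, hNs _ ⟨x, hx, rfl⟩⟩)
    | algebraMap r => simp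
    | add x y _ _ hx hy => rw [map_add]; exact add_mem hx hy
    | mul x y _ _ hx hy => rw [map_mul]; exact mul_mem hx hy
  obtain ⟨χ, -⟩ := RingHom.exists_comp_eq_of_range_le hε hφ
  exact ⟨N, hN, ⟨χ⟩⟩

theorem nonempty_ringHom_away_adjoin_int_zmod {L : Type*} [CommRing L] [IsDomain L] [CharZero L]
    {θ : L} (hθ : IsIntegral ℤ θ) {N : ℤ} {p : ℕ} (hp : p.Prime) (hpN : ¬(p : ℤ) ∣ N)
    {r : ZMod p} (hr : aeval r (minpoly ℤ θ) = 0) :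
    Nonempty (Localization.Away (N : Algebra.adjoin ℤ {θ}) →+* ZMod p) := by
  have := Fact.mk hp
  let σ : Algebra.adjoin ℤ {θ} →+* ZMod p :=
    (AdjoinRoot.lift (algebraMap ℤ (ZMod p)) r hr).comp (minpoly.equivAdjoin hθ).symm.toRingHom
  have hσ : IsUnit (σ N) := by
    rw [map_intCast]
    exact Ne.isUnit fun h => hpN ((ZMod.intCast_zmod_eq_zero_iff_dvd N p).mp h)
  exact ⟨Localization.awayLift σ N hσ⟩

/-- Let `S` be an integral domain of characteristic zero that is finitely generated as a
`ℤ`-algebra.  Then there exist infinitely many primes `p` such that there is a surjective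
ring homomorphism from `S` onto the finite field `𝔽_p`. -/
theorem stmt19 {S : Type*} [CommRing S] [IsDomain S] [CharZero S]
    (hfg : Algebra.FiniteType ℤ S) :
    {p : ℕ | p.Prime ∧ ∃ φ : S →+* ZMod p, Function.Surjective φ}.Infinite := by
  obtain ⟨L, _, _, _, ⟨φ⟩⟩ := exists_ringHom_finiteDimensional_rat (algebraMap S (FractionRing S))
  have : CharZero L := charZero_of_injective_algebraMap (algebraMap ℚ L).injective
  obtain ⟨θ, hθ, hθL⟩ := exists_isIntegral_int_adjoin_eq_top L
  obtain ⟨N, hN, ⟨χ⟩⟩ := exists_ringHom_away_adjoin_int φ hθL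
  refine ((infinite_setOf_prime_exists_aeval_eq_zero _ (minpoly.degree_pos hθ)).sdiff
    (Int.finite_setOf_natCast_dvd hN)).mono ?_
  rintro p ⟨⟨hp, r, hr⟩, hpN⟩
  obtain ⟨σ⟩ := nonempty_ringHom_away_adjoin_int_zmod hθ hp hpN hr
  exact ⟨hp, σ.comp χ, ZMod.ringHom_surjective _⟩
end
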